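/- arXiv:0806.1027 — 4 statements merged into one kernel-verified Lean document; each statement's English description precedes it below -/
import Mathlib

section
/- For every integer n ≥ 0, the sum ∑_{k=1}^{n+1} S(n+1,k) (k-1)! is bounded above by n! · e^{n+2}, where S(n+1,k) are Stirling numbers of the second kind and e is Euler's number. -/
open Finset

/-- Stirling number of the second kind. -/
def stirling2 (n k : ℕ) : ℕ :=
  ((Finset.univ : Finset (Finpartition (Finset.univ : Finset (Fin n)))).filter
    (fun P => P.parts.card = k)).card

noncomputable def plabel {m k : ℕ} (P : Finpartition (Finset.univ : Finset (Fin m)))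
    (h : P.parts.card = k) : Fin m → Fin k :=
  fun i => finCongr h (P.parts.equivFin ⟨P.part i, P.part_mem.2 (Finset.mem_univ i)⟩)

lemma plabel_eq_iff {m k : ℕ} (P : Finpartition (Finset.univ : Finset (Fin m)))
    (h : P.parts.card = k) (i j : Fin m) :
    plabel P h i = plabel P h j ↔ P.part i = P.part j := by
  unfold plabel
  constructor
  · intro hh
    exact congrArg Subtype.val (P.parts.equivFin.injective ((finCongr h).injective hh))
  · intro hh
    have h2 : (⟨P.part i, P.part_mem.2 (Finset.mem_univ i)⟩ : P.parts)
        = ⟨P.part j, P.part_mem.2 (Finset.mem_univ j)⟩ := Subtype.ext hh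
    rw [h2]

lemma plabel_surjective {m k : ℕ} (P : Finpartition (Finset.univ : Finset (Fin m)))
    (h : P.parts.card = k) : Function.Surjective (plabel P h) := by
  intro x
  set t := P.parts.equivFin.symm ((finCongr h).symm x) with ht
  obtain ⟨i, hi⟩ := P.nonempty_of_mem_parts t.2
  refine ⟨i, ?_⟩
  have hpt : P.part i = t.1 := P.part_eq_of_mem t.2 hi
  have : (⟨P.part i, P.part_mem.2 (Finset.mem_univ i)⟩ : P.parts) = t := Subtype.ext hpt
  simp [plabel, this, ht]

lemma stirling2_mul_factorial_le (m k : ℕ) :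
    stirling2 m k * Nat.factorial k ≤ k ^ m := by
  classical
  set A := {P : Finpartition (Finset.univ : Finset (Fin m)) // P.parts.card = k}
  let F : A × Equiv.Perm (Fin k) → (Fin m → Fin k) :=
    fun x i => x.2 (plabel x.1.1 x.1.2 i)
  have hF : Function.Injective F := by
    rintro ⟨⟨P, hP⟩, σ⟩ ⟨⟨Q, hQ⟩, τ⟩ hfg
    have hfun : ∀ i, σ (plabel P hP i) = τ (plabel Q hQ i) := fun i => congrFun hfg i
    have hpart : ∀ i, P.part i = Q.part i := by
      intro i
      ext j
      have h1 : j ∈ P.part i ↔ P.part j = P.part i :=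
        P.mem_part_iff_part_eq_part (Finset.mem_univ j) (Finset.mem_univ i)
      have h2 : j ∈ Q.part i ↔ Q.part j = Q.part i :=
        Q.mem_part_iff_part_eq_part (Finset.mem_univ j) (Finset.mem_univ i)
      have h3 : P.part j = P.part i ↔ Q.part j = Q.part i := by
        rw [← plabel_eq_iff P hP, ← plabel_eq_iff Q hQ]
        constructor
        · intro h
          apply τ.injective
          rw [← hfun j, ← hfun i, h]
        · intro h
          apply σ.injective
          rw [hfun j, hfun i, h]
      rw [h1, h2, h3]
    have hPQ : P = Q := by
      apply Finpartition.ext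
      ext t
      constructor
      · intro ht
        obtain ⟨i, hi⟩ := P.nonempty_of_mem_parts ht
        have := P.part_eq_of_mem ht hi
        rw [← this, hpart i]
        exact Q.part_mem.2 (Finset.mem_univ i)
      · intro ht
        obtain ⟨i, hi⟩ := Q.nonempty_of_mem_parts ht
        have := Q.part_eq_of_mem ht hi
        rw [← this, ← hpart i]
        exact P.part_mem.2 (Finset.mem_univ i)
    subst hPQ
    have hστ : σ = τ := by
      apply Equiv.ext
      intro x
      obtain ⟨i, rfl⟩ := plabel_surjective P hP x
      exact hfun i
    simp [hστ]
  have hcard := Fintype.card_le_of_injective F hF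
  have h1 : Fintype.card A = stirling2 m k := by
    rw [Fintype.card_subtype]
    rfl
  rw [Fintype.card_prod, Fintype.card_perm, Fintype.card_fin, Fintype.card_fun,
    Fintype.card_fin, Fintype.card_fin, h1] at hcard
  exact hcard

lemma geom_exp_sum (m : ℕ) : ∑ k ∈ Finset.Icc 1 m, Real.exp 1 ^ k ≤ Real.exp 1 ^ (m + 1) := by
  induction m with
  | zero => simp; positivity
  | succ m ih =>
    rw [Finset.sum_Icc_succ_top (by omega)]
    have h2 : (2 : ℝ) ≤ Real.exp 1 := by
      have := Real.add_one_le_exp 1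
      linarith
    have hpos : (0:ℝ) < Real.exp 1 ^ (m + 1) := by positivity
    calc ∑ k ∈ Finset.Icc 1 m, Real.exp 1 ^ k + Real.exp 1 ^ (m+1)
        ≤ Real.exp 1 ^ (m+1) + Real.exp 1 ^ (m+1) := by linarith
      _ = 2 * Real.exp 1 ^ (m+1) := by ring
      _ ≤ Real.exp 1 * Real.exp 1 ^ (m+1) := by nlinarith
      _ = Real.exp 1 ^ (m+2) := by ring

/-- For every `n ≥ 0`, `∑_{k=1}^{n+1} S(n+1,k) (k-1)! ≤ n! e^(n+2)`. -/
theorem stmt2 (n : ℕ) :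
    (∑ k ∈ Finset.Icc 1 (n + 1), (stirling2 (n + 1) k : ℝ) * (Nat.factorial (k - 1) : ℝ))
      ≤ (Nat.factorial n : ℝ) * Real.exp 1 ^ (n + 2) := by
  have key : ∀ k ∈ Finset.Icc 1 (n+1),
      (stirling2 (n + 1) k : ℝ) * (Nat.factorial (k - 1) : ℝ)
        ≤ (Nat.factorial n : ℝ) * Real.exp 1 ^ k := by
    intro k hk
    rw [Finset.mem_Icc] at hk
    have hk1 : 1 ≤ k := hk.1
    -- step 1: stirling2 (n+1) k * (k-1)! ≤ k^n  (in ℕ)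
    have hnat : stirling2 (n+1) k * Nat.factorial (k-1) ≤ k ^ n := by
      have h := stirling2_mul_factorial_le (n+1) k
      have hfact : Nat.factorial k = k * Nat.factorial (k-1) := by
        cases k with
        | zero => omega
        | succ k => simp [Nat.factorial_succ]
      rw [hfact, pow_succ'] at h
      have := Nat.le_of_mul_le_mul_left (by
        calc k * (stirling2 (n+1) k * Nat.factorial (k-1))
            = stirling2 (n+1) k * (k * Nat.factorial (k-1)) := by ring
          _ ≤ k * k ^ n := h) (by omega : 0 < k)
      exact this
    -- step 2: (k:ℝ)^n ≤ n! * exp 1 ^ k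
    have hreal : ((k : ℝ)) ^ n ≤ (Nat.factorial n : ℝ) * Real.exp 1 ^ k := by
      have h := Real.pow_div_factorial_le_exp (x := (k:ℝ)) (by positivity) n
      have hfpos : (0:ℝ) < (Nat.factorial n : ℝ) := by positivity
      rw [div_le_iff₀ hfpos] at h
      calc ((k:ℝ)) ^ n ≤ Real.exp (k:ℝ) * (Nat.factorial n : ℝ) := h
        _ = (Nat.factorial n : ℝ) * Real.exp 1 ^ k := by
            rw [Real.exp_one_pow]; ring
    calc (stirling2 (n + 1) k : ℝ) * (Nat.factorial (k - 1) : ℝ)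
        = ((stirling2 (n+1) k * Nat.factorial (k-1) : ℕ) : ℝ) := by push_cast; ring
      _ ≤ ((k ^ n : ℕ) : ℝ) := by exact_mod_cast hnat
      _ = (k : ℝ) ^ n := by push_cast; ring
      _ ≤ (Nat.factorial n : ℝ) * Real.exp 1 ^ k := hreal
  calc (∑ k ∈ Finset.Icc 1 (n + 1), (stirling2 (n + 1) k : ℝ) * (Nat.factorial (k - 1) : ℝ))
      ≤ ∑ k ∈ Finset.Icc 1 (n+1), (Nat.factorial n : ℝ) * Real.exp 1 ^ k :=
        Finset.sum_le_sum key
    _ = (Nat.factorial n : ℝ) * ∑ k ∈ Finset.Icc 1 (n+1), Real.exp 1 ^ k := by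
        rw [Finset.mul_sum]
    _ ≤ (Nat.factorial n : ℝ) * Real.exp 1 ^ (n + 2) := by
        have := geom_exp_sum (n+1)
        have hfpos : (0:ℝ) ≤ (Nat.factorial n : ℝ) := by positivity
        nlinarith [this]
end

section
/- For every integer n ≥ 1, ∑_{k=1}^{n} k^{n-1} ≤ (n-1)! · e^{n+1}. -/
open Finset

lemma pow_le_fact_mul_exp (x : ℝ) (hx : 0 ≤ x) (m : ℕ) :
    x ^ m ≤ (Nat.factorial m : ℝ) * Real.exp x := by
  have h : x ^ m / (Nat.factorial m : ℝ) ≤ Real.exp x := by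
    calc x ^ m / (Nat.factorial m : ℝ)
        ≤ ∑ i ∈ range (m + 1), x ^ i / i.factorial := by
          refine Finset.single_le_sum (f := fun i => x ^ i / (i.factorial : ℝ)) ?_ (Finset.self_mem_range_succ m)
          intro i _
          positivity
      _ ≤ Real.exp x := Real.sum_le_exp_of_nonneg hx _
  have hf : (0 : ℝ) < (Nat.factorial m : ℝ) := by positivity
  calc x ^ m = x ^ m / (Nat.factorial m : ℝ) * (Nat.factorial m : ℝ) := by
        field_simp
    _ ≤ Real.exp x * (Nat.factorial m : ℝ) := by
        exact mul_le_mul_of_nonneg_right h hf.le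
    _ = (Nat.factorial m : ℝ) * Real.exp x := by ring

/-- For every `n ≥ 1`, `∑_{k=1}^n k^(n-1) ≤ (n-1)! · e^(n+1)`. -/
theorem stmt3 (n : ℕ) (hn : 1 ≤ n) :
    (∑ k ∈ Finset.Icc 1 n, (k : ℝ) ^ (n - 1))
      ≤ (Nat.factorial (n - 1) : ℝ) * Real.exp 1 ^ (n + 1) := by
  have e1 : (1 : ℝ) < Real.exp 1 := by
    have := Real.add_one_lt_exp (x := 1) one_ne_zero
    linarith
  have step1 : (∑ k ∈ Finset.Icc 1 n, (k : ℝ) ^ (n - 1))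
      ≤ (Nat.factorial (n - 1) : ℝ) * ∑ k ∈ Finset.Icc 1 n, Real.exp 1 ^ k := by
    rw [Finset.mul_sum]
    refine Finset.sum_le_sum fun k _ => ?_
    have := pow_le_fact_mul_exp (k : ℝ) (by positivity) (n - 1)
    calc (k : ℝ) ^ (n - 1) ≤ (Nat.factorial (n - 1) : ℝ) * Real.exp (k : ℝ) := this
      _ = (Nat.factorial (n - 1) : ℝ) * Real.exp 1 ^ k := by
          rw [← Real.exp_nat_mul]; norm_num
  have step2 : (∑ k ∈ Finset.Icc 1 n, Real.exp 1 ^ k) ≤ Real.exp 1 ^ (n + 1) := by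
    have hsub : (∑ k ∈ Finset.Icc 1 n, Real.exp 1 ^ k)
        ≤ ∑ k ∈ Finset.range (n + 1), Real.exp 1 ^ k := by
      refine Finset.sum_le_sum_of_subset_of_nonneg ?_ (fun i _ _ => by positivity)
      intro k hk
      simp only [Finset.mem_Icc] at hk
      simp [Finset.mem_range]; omega
    have hgeom : ∑ k ∈ Finset.range (n + 1), Real.exp 1 ^ k
        = (Real.exp 1 ^ (n + 1) - 1) / (Real.exp 1 - 1) := geom_sum_eq (by linarith) _
    have hpos : (0 : ℝ) ≤ Real.exp 1 ^ (n + 1) - 1 := by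
      have : (1 : ℝ) ≤ Real.exp 1 ^ (n + 1) := one_le_pow₀ e1.le
      linarith
    calc (∑ k ∈ Finset.Icc 1 n, Real.exp 1 ^ k)
        ≤ (Real.exp 1 ^ (n + 1) - 1) / (Real.exp 1 - 1) := hsub.trans_eq hgeom
      _ ≤ Real.exp 1 ^ (n + 1) - 1 := by
          apply div_le_self hpos
          have := Real.add_one_lt_exp (x := 1) one_ne_zero
          linarith
      _ ≤ Real.exp 1 ^ (n + 1) := by linarith
  calc (∑ k ∈ Finset.Icc 1 n, (k : ℝ) ^ (n - 1))
      ≤ (Nat.factorial (n - 1) : ℝ) * ∑ k ∈ Finset.Icc 1 n, Real.exp 1 ^ k := step1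
    _ ≤ (Nat.factorial (n - 1) : ℝ) * Real.exp 1 ^ (n + 1) := by
        apply mul_le_mul_of_nonneg_left step2 (by positivity)
end

section
/- For each s ≥ 1 and bounded operators g_n on Hilbert spaces H_n, the s-th component of the dual cumulant expansion satisfies the operator-norm bound ‖(U⁺(t)g)_s‖ ≤ ∑_{n=0}^{s} binom(s,n) · n! · e^{n+2} · ‖g_{s-n}‖, where (U⁺(t)g)_s = ∑_{n=0}^{s} (1/(s-n)!) ∑_{j_1≠⋯≠j_{s-n}} A⁺_{1+n}(t) g_{s-n} and each A⁺_{1+n}(t) is a sum over partitions of a (1+n)-element set of (±(|P|-1)!)-weighted products of unitary conjugations (each of operator norm ≤ product of norms). -/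
open Finset

section AuxCumulant

variable {n : ℕ}

/-- The element `0` of `Fin (1 + n)`. -/
abbrev auxFzero (n : ℕ) : Fin (1+n) := ⟨0, by omega⟩

/-- Canonical equivalence between the parts other than the part of `0` and `Fin (k - 1)`. -/
noncomputable def auxBlockEquiv (P : Finpartition (univ : Finset (Fin (1+n)))) :
    (P.parts.erase (P.part (auxFzero n)) : Finset (Finset (Fin (1+n)))) ≃ Fin (P.parts.card - 1) :=
  Finset.equivFinOfCardEq (Finset.card_erase_of_mem (P.part_mem.2 (Finset.mem_univ _)))

/-- Encoding of a partition together with a permutation of its non-zero parts as a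
coloring function. -/
noncomputable def auxPcolor (P : Finpartition (univ : Finset (Fin (1+n))))
    (σ : Equiv.Perm (Fin (P.parts.card - 1))) (x : Fin (1+n)) : Fin (1+n) :=
  if h : P.part x = P.part (auxFzero n) then auxFzero n
  else
    ⟨(σ (auxBlockEquiv P ⟨P.part x,
        Finset.mem_erase.2 ⟨h, P.part_mem.2 (Finset.mem_univ x)⟩⟩)).val + 1,
      by
        have h1 := (σ (auxBlockEquiv P ⟨P.part x,
          Finset.mem_erase.2 ⟨h, P.part_mem.2 (Finset.mem_univ x)⟩⟩)).isLt
        have h2 : P.parts.card ≤ 1 + n := by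
          simpa using P.card_parts_le_card
        omega⟩

lemma auxPcolor_zero (P : Finpartition (univ : Finset (Fin (1+n))))
    (σ : Equiv.Perm (Fin (P.parts.card - 1))) : auxPcolor P σ (auxFzero n) = auxFzero n := by
  unfold auxPcolor; simp

lemma auxPcolor_part_eq {P : Finpartition (univ : Finset (Fin (1+n)))}
    {σ : Equiv.Perm (Fin (P.parts.card - 1))} {x y : Fin (1+n)}
    (h : auxPcolor P σ x = auxPcolor P σ y) : P.part x = P.part y := by
  unfold auxPcolor at h
  split_ifs at h with h1 h2 h2
  · rw [h1, h2]
  · exfalso; have hv := congrArg Fin.val h; simp at hv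
  · exfalso; have hv := congrArg Fin.val h; simp at hv
  · simp only [Fin.mk.injEq] at h
    have h' : (σ (auxBlockEquiv P
          ⟨P.part x, Finset.mem_erase.2 ⟨h1, P.part_mem.2 (Finset.mem_univ x)⟩⟩))
        = (σ (auxBlockEquiv P
          ⟨P.part y, Finset.mem_erase.2 ⟨h2, P.part_mem.2 (Finset.mem_univ y)⟩⟩)) :=
      Fin.ext (by omega)
    exact congrArg Subtype.val ((auxBlockEquiv P).injective (σ.injective h'))

lemma auxPcolor_congr {P : Finpartition (univ : Finset (Fin (1+n)))}
    {σ : Equiv.Perm (Fin (P.parts.card - 1))} {x y : Fin (1+n)}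
    (h : P.part x = P.part y) : auxPcolor P σ x = auxPcolor P σ y := by
  by_cases h1 : P.part x = P.part (auxFzero n)
  · have h2 : P.part y = P.part (auxFzero n) := h ▸ h1
    unfold auxPcolor; rw [dif_pos h1, dif_pos h2]
  · have h2 : ¬ P.part y = P.part (auxFzero n) := h ▸ h1
    unfold auxPcolor; rw [dif_neg h1, dif_neg h2]
    simp only [Fin.mk.injEq]
    exact congrArg (fun A => ((σ (auxBlockEquiv P A)).val + 1)) (Subtype.ext h)

lemma auxPartsExt {P Q : Finpartition (univ : Finset (Fin (1+n)))}
    (h : ∀ x y, P.part x = P.part y ↔ Q.part x = Q.part y) : P = Q := by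
  have key : ∀ P Q : Finpartition (univ : Finset (Fin (1+n))),
      (∀ x y, P.part x = P.part y ↔ Q.part x = Q.part y) → P.parts ⊆ Q.parts := by
    intro P Q hPQ B hB
    obtain ⟨x, hx⟩ := P.nonempty_of_mem_parts hB
    have hBx : P.part x = B := P.part_eq_of_mem hB hx
    have : B = Q.part x := by
      ext y
      rw [← hBx,
        P.mem_part_iff_part_eq_part (Finset.mem_univ y) (Finset.mem_univ x),
        Q.mem_part_iff_part_eq_part (Finset.mem_univ y) (Finset.mem_univ x)]
      exact hPQ y x
    rw [this]; exact Q.part_mem.2 (Finset.mem_univ x)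
  exact Finpartition.ext (Finset.Subset.antisymm (key P Q h) (key Q P (fun x y => (h x y).symm)))

lemma auxSigmaInj : Function.Injective
    (fun z : (Σ P : Finpartition (univ : Finset (Fin (1+n))),
        Equiv.Perm (Fin (P.parts.card - 1))) =>
      (fun x : {x : Fin (1+n) // x ≠ auxFzero n} => auxPcolor z.1 z.2 x.1)) := by
  rintro ⟨P, σ⟩ ⟨Q, τ⟩ hfun
  have hc : ∀ x : Fin (1+n), auxPcolor P σ x = auxPcolor Q τ x := by
    intro x
    by_cases hx : x = auxFzero n
    · rw [hx, auxPcolor_zero, auxPcolor_zero]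
    · exact congrFun hfun ⟨x, hx⟩
  have hPQ : P = Q := by
    apply auxPartsExt
    intro x y
    constructor
    · intro h
      exact auxPcolor_part_eq (σ := τ) (by rw [← hc, ← hc]; exact auxPcolor_congr h)
    · intro h
      exact auxPcolor_part_eq (σ := σ) (by rw [hc, hc]; exact auxPcolor_congr h)
  subst hPQ
  have hστ : σ = τ := by
    apply Equiv.ext
    intro t
    have hBs := (auxBlockEquiv P).apply_symm_apply t
    set Bs := (auxBlockEquiv P).symm t with hBsdef
    obtain ⟨x, hx⟩ := P.nonempty_of_mem_parts (Finset.mem_of_mem_erase Bs.2)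
    have hBne : Bs.1 ≠ P.part (auxFzero n) := (Finset.mem_erase.1 Bs.2).1
    have hPx : P.part x = Bs.1 := P.part_eq_of_mem (Finset.mem_of_mem_erase Bs.2) hx
    have hxne : ¬ P.part x = P.part (auxFzero n) := by rw [hPx]; exact hBne
    have hcx := hc x
    unfold auxPcolor at hcx
    rw [dif_neg hxne, dif_neg hxne] at hcx
    simp only [Fin.mk.injEq, Nat.add_right_cancel_iff] at hcx
    have hA : (⟨P.part x, Finset.mem_erase.2 ⟨hxne, P.part_mem.2 (Finset.mem_univ x)⟩⟩ :
        (P.parts.erase (P.part (auxFzero n)) : Finset _)) = Bs := Subtype.ext hPx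
    rw [hA, hBs] at hcx
    exact Fin.ext hcx
  rw [hστ]

/-- The partition-weighted sum `∑_P (|P|-1)!` over partitions of a `(1+n)`-element set is at
most `(1+n)^n`. -/
lemma auxSumFactLe (n : ℕ) :
    ∑ P : Finpartition (univ : Finset (Fin (1+n))), (P.parts.card - 1).factorial ≤ (1+n)^n := by
  classical
  have key := Fintype.card_le_of_injective _ (auxSigmaInj (n := n))
  rw [Fintype.card_sigma] at key
  simp only [Fintype.card_perm, Fintype.card_fin] at key
  have hcard : Fintype.card {x : Fin (1+n) // x ≠ auxFzero n} = n := by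
    simp only [ne_eq]
    rw [Fintype.card_subtype_compl, Fintype.card_subtype_eq, Fintype.card_fin]; omega
  rw [Fintype.card_fun, hcard, Fintype.card_fin] at key
  exact key

/-- `(1+n)^n ≤ e^n · n!`. -/
lemma auxPowLe (n : ℕ) :
    ((1 + n : ℕ) : ℝ) ^ n ≤ Real.exp 1 ^ n * (n.factorial : ℝ) := by
  induction n with
  | zero => simp
  | succ n ih =>
    have hpos : (0:ℝ) < (n:ℝ) + 1 := by positivity
    have h1 : ((n:ℝ) + 2) ≤ Real.exp (1/((n:ℝ)+1)) * ((n:ℝ) + 1) := by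
      have := Real.add_one_le_exp (1/((n:ℝ)+1))
      have h2 : (1/((n:ℝ)+1) + 1) * ((n:ℝ)+1) = (n:ℝ) + 2 := by field_simp; ring
      nlinarith [Real.exp_pos (1/((n:ℝ)+1))]
    have h2 : ((n:ℝ) + 2) ^ (n+1) ≤ (Real.exp (1/((n:ℝ)+1)) * ((n:ℝ) + 1)) ^ (n+1) :=
      pow_le_pow_left₀ (by positivity) h1 _
    have h3 : (Real.exp (1/((n:ℝ)+1)))^(n+1) = Real.exp 1 := by
      rw [← Real.exp_nat_mul]
      congr 1
      field_simp
      push_cast; ring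
    have h4 : ((1 + (n+1) : ℕ) : ℝ) = (n:ℝ) + 2 := by push_cast; ring
    rw [h4]
    calc ((n:ℝ) + 2) ^ (n+1) ≤ (Real.exp (1/((n:ℝ)+1)))^(n+1) * ((n:ℝ) + 1)^(n+1) := by
          rw [← mul_pow]; exact h2
      _ = Real.exp 1 * (((n:ℝ)+1) * ((n:ℝ)+1)^n) := by rw [h3, pow_succ]; ring
      _ ≤ Real.exp 1 * (((n:ℝ)+1) * (Real.exp 1 ^ n * (n.factorial : ℝ))) := by
          have hc : ((1 + n : ℕ) : ℝ) = (n:ℝ) + 1 := by push_cast; ring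
          refine mul_le_mul_of_nonneg_left
            (mul_le_mul_of_nonneg_left ?_ (by positivity)) (le_of_lt (Real.exp_pos 1))
          rw [← hc]; exact ih
      _ = Real.exp 1 ^ (n+1) * ((n+1).factorial : ℝ) := by
          rw [Nat.factorial_succ]; push_cast; ring

end AuxCumulant

set_option maxHeartbeats 1000000

/-- Componentwise norm bound for the dual cumulant expansion. The spaces `E n`
abstract the spaces of bounded operators on the `n`-particle Hilbert spaces;
`T n j P` is the product, over the blocks of the partition `P` of a
`(1+n)`-element set, of the isometric conjugation groups (for the index tuple `j`),
so that each `T n j P` does not increase the norm. Then the `s`-th component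
`(U⁺(t)g)_s = ∑_{n=0}^s (1/(s-n)!) ∑_{j_1≠⋯≠j_{s-n}} ∑_P (-1)^(|P|-1)(|P|-1)! T n j P g_{s-n}`
satisfies `‖(U⁺(t)g)_s‖ ≤ ∑_{n=0}^s binom(s,n) n! e^(n+2) ‖g_{s-n}‖`. -/
theorem stmt12 (s : ℕ) (E : ℕ → Type*)
    [∀ n, NormedAddCommGroup (E n)] [∀ n, NormedSpace ℝ (E n)]
    (g : (n : ℕ) → E n)
    (T : (n : ℕ) → (Fin (s - n) → Fin s) →
      Finpartition (Finset.univ : Finset (Fin (1 + n))) → E (s - n) → E s)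
    (hT : ∀ n j P, ‖T n j P (g (s - n))‖ ≤ ‖g (s - n)‖) :
    ‖∑ n ∈ Finset.range (s + 1), ((Nat.factorial (s - n) : ℝ))⁻¹ •
        ∑ j ∈ (Finset.univ : Finset (Fin (s - n) → Fin s)).filter
          (fun j => Function.Injective j),
          ∑ P : Finpartition (Finset.univ : Finset (Fin (1 + n))),
            ((-1 : ℝ) ^ (P.parts.card - 1) * (Nat.factorial (P.parts.card - 1) : ℝ)) •
              T n j P (g (s - n))‖
      ≤ ∑ n ∈ Finset.range (s + 1),
          (s.choose n : ℝ) * (Nat.factorial n : ℝ) * Real.exp 1 ^ (n + 2) *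
            ‖g (s - n)‖ := by
  have hexp1 : (1:ℝ) ≤ Real.exp 1 := by nlinarith [Real.add_one_le_exp (1:ℝ)]
  refine le_trans (norm_sum_le _ _) (Finset.sum_le_sum fun n hn => ?_)
  have hns : n ≤ s := Nat.lt_succ_iff.mp (Finset.mem_range.mp hn)
  set W : ℝ := ∑ P : Finpartition (univ : Finset (Fin (1+n))),
      ((P.parts.card - 1).factorial : ℝ) with hWdef
  have hW : W ≤ Real.exp 1 ^ (n+2) * (n.factorial : ℝ) := by
    have h1 : W = ((∑ P : Finpartition (univ : Finset (Fin (1+n))),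
        (P.parts.card - 1).factorial : ℕ) : ℝ) := by push_cast [hWdef]; rfl
    have h2 : W ≤ (((1+n)^n : ℕ) : ℝ) := by
      rw [h1]; exact_mod_cast auxSumFactLe n
    refine le_trans h2 (le_trans (by exact_mod_cast auxPowLe n) ?_)
    have hmono : Real.exp 1 ^ n ≤ Real.exp 1 ^ (n+2) :=
      pow_le_pow_right₀ hexp1 (by omega)
    exact mul_le_mul_of_nonneg_right hmono (by positivity)
  have hWnonneg : 0 ≤ W := by positivity
  set J := ((univ : Finset (Fin (s - n) → Fin s)).filter
      (fun j => Function.Injective j)).card with hJdef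
  have hJ : J = (s - n).factorial * s.choose n := by
    rw [hJdef, ← Fintype.card_subtype,
      Fintype.card_congr (Equiv.subtypeInjectiveEquivEmbedding _ _),
      Fintype.card_embedding_eq, Fintype.card_fin, Fintype.card_fin,
      Nat.descFactorial_eq_factorial_mul_choose, Nat.choose_symm hns]
  rw [norm_smul, norm_inv, Real.norm_natCast]
  have hinner : ‖∑ j ∈ (univ : Finset (Fin (s - n) → Fin s)).filter
          (fun j => Function.Injective j),
          ∑ P : Finpartition (Finset.univ : Finset (Fin (1 + n))),
            ((-1 : ℝ) ^ (P.parts.card - 1) * (Nat.factorial (P.parts.card - 1) : ℝ)) •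
              T n j P (g (s - n))‖ ≤ (J : ℝ) * (W * ‖g (s - n)‖) := by
    refine le_trans (norm_sum_le _ _) ?_
    have hper : ∀ j ∈ (univ : Finset (Fin (s - n) → Fin s)).filter
        (fun j => Function.Injective j),
        ‖∑ P : Finpartition (Finset.univ : Finset (Fin (1 + n))),
            ((-1 : ℝ) ^ (P.parts.card - 1) * (Nat.factorial (P.parts.card - 1) : ℝ)) •
              T n j P (g (s - n))‖ ≤ W * ‖g (s - n)‖ := by
      intro j _
      refine le_trans (norm_sum_le _ _) ?_
      rw [hWdef, Finset.sum_mul]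
      refine Finset.sum_le_sum fun P _ => ?_
      rw [norm_smul, Real.norm_eq_abs, abs_mul, abs_pow, abs_neg, abs_one, one_pow,
        one_mul, Nat.abs_cast]
      exact mul_le_mul_of_nonneg_left (hT n j P) (by positivity)
    refine le_trans (Finset.sum_le_sum hper) ?_
    rw [Finset.sum_const, nsmul_eq_mul]
  refine le_trans (mul_le_mul_of_nonneg_left hinner (by positivity)) ?_
  have heq : ((s - n).factorial : ℝ)⁻¹ * ((J : ℝ) * (W * ‖g (s - n)‖))
      = (s.choose n : ℝ) * (W * ‖g (s - n)‖) := by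
    rw [hJ]; push_cast; field_simp
  rw [heq]
  calc (s.choose n : ℝ) * (W * ‖g (s - n)‖)
      ≤ (s.choose n : ℝ) * ((Real.exp 1 ^ (n+2) * (n.factorial : ℝ)) * ‖g (s - n)‖) := by
        refine mul_le_mul_of_nonneg_left (mul_le_mul_of_nonneg_right hW (norm_nonneg _))
          (Nat.cast_nonneg _)
    _ = (s.choose n : ℝ) * (Nat.factorial n : ℝ) * Real.exp 1 ^ (n + 2) * ‖g (s - n)‖ := by
        ring
end

section
/- If 0 < γ < e^{-1} and g belongs to the space L_γ of sequences of bounded operators with norm ‖g‖_γ = max_{n≥0} (γ^n/n!)‖g_n‖, then the dual cumulant series U⁺(t)g converges and satisfies ‖U⁺(t)g‖_γ ≤ e²(1-γe)^{-1}‖g‖_γ. -/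
open Finset

private lemma geom_partial_le {r : ℝ} (h0 : 0 ≤ r) (h1 : r < 1) (N : ℕ) :
    ∑ i ∈ Finset.range N, r ^ i ≤ (1 - r)⁻¹ := by
  have hr : 0 < 1 - r := by linarith
  rw [← one_div, le_div_iff₀ hr]
  have h2 := geom_sum_mul r N
  have h3 : (0:ℝ) ≤ r ^ N := pow_nonneg h0 N
  nlinarith [h2, h3]

private abbrev K {n : ℕ} (P : Finpartition (Finset.univ : Finset (Fin (1 + n)))) :
    Finset (Finset (Fin (1 + n))) :=
  P.parts.erase (P.part ⟨0, by omega⟩)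

private noncomputable def enc {n : ℕ} (P : Finpartition (Finset.univ : Finset (Fin (1 + n))))
    (π : Equiv.Perm ↥(K P)) (B : Finset (Fin (1 + n))) : Fin (1 + n) :=
  if h : B ∈ K P then
    ⟨(Fintype.equivFin ↥(K P) (π ⟨B, h⟩)).1 + 1, by
      have h1 := (Fintype.equivFin ↥(K P) (π ⟨B, h⟩)).isLt
      have h2 : Fintype.card ↥(K P) = (K P).card := Fintype.card_coe _
      have h3 : P.part ⟨0, by omega⟩ ∈ P.parts := P.part_mem.mpr (Finset.mem_univ _)
      have h5 : (K P).card = P.parts.card - 1 := Finset.card_erase_of_mem h3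
      have h4 : P.parts.card ≤ 1 + n := by simpa using P.card_parts_le_card
      omega⟩
  else ⟨0, by omega⟩

private lemma enc_pos_val {n : ℕ} (P : Finpartition (Finset.univ : Finset (Fin (1 + n))))
    (π : Equiv.Perm ↥(K P)) (B : Finset (Fin (1 + n))) (h : B ∈ K P) :
    (enc P π B).1 = (Fintype.equivFin ↥(K P) (π ⟨B, h⟩)).1 + 1 := by
  simp only [enc, dif_pos h]

private lemma enc_neg {n : ℕ} (P : Finpartition (Finset.univ : Finset (Fin (1 + n))))
    (π : Equiv.Perm ↥(K P)) (B : Finset (Fin (1 + n))) (h : B ∉ K P) :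
    (enc P π B).1 = 0 := by
  simp only [enc, dif_neg h]

private lemma enc_inj {n : ℕ} (P : Finpartition (Finset.univ : Finset (Fin (1 + n))))
    (π : Equiv.Perm ↥(K P)) {B₁ B₂ : Finset (Fin (1 + n))}
    (h₁ : B₁ ∈ P.parts) (h₂ : B₂ ∈ P.parts)
    (he : enc P π B₁ = enc P π B₂) : B₁ = B₂ := by
  have hv := congrArg Fin.val he
  by_cases k₁ : B₁ ∈ K P <;> by_cases k₂ : B₂ ∈ K P
  · rw [enc_pos_val P π B₁ k₁, enc_pos_val P π B₂ k₂] at hv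
    have e1 : (Fintype.equivFin ↥(K P)) (π ⟨B₁, k₁⟩) = (Fintype.equivFin ↥(K P)) (π ⟨B₂, k₂⟩) :=
      Fin.ext (by omega)
    have e2 := (Equiv.injective _) e1
    have e3 := (Equiv.injective π) e2
    exact congrArg Subtype.val e3
  · rw [enc_pos_val P π B₁ k₁, enc_neg P π B₂ k₂] at hv; omega
  · rw [enc_neg P π B₁ k₁, enc_pos_val P π B₂ k₂] at hv; omega
  · have e₁ : B₁ = P.part ⟨0, by omega⟩ := by
      by_contra hne; exact k₁ (Finset.mem_erase.mpr ⟨hne, h₁⟩)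
    have e₂ : B₂ = P.part ⟨0, by omega⟩ := by
      by_contra hne; exact k₂ (Finset.mem_erase.mpr ⟨hne, h₂⟩)
    rw [e₁, e₂]

private lemma part_iff_enc {n : ℕ} (P : Finpartition (Finset.univ : Finset (Fin (1 + n))))
    (π : Equiv.Perm ↥(K P)) (u v : Fin (1 + n)) :
    P.part u = P.part v ↔ enc P π (P.part u) = enc P π (P.part v) :=
  ⟨fun h => by rw [h],
   fun h => enc_inj P π (P.part_mem.mpr (Finset.mem_univ u)) (P.part_mem.mpr (Finset.mem_univ v)) h⟩

private lemma parts_det {n : ℕ} {P₁ P₂ : Finpartition (Finset.univ : Finset (Fin (1 + n)))}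
    {π₁ : Equiv.Perm ↥(K P₁)} {π₂ : Equiv.Perm ↥(K P₂)}
    (h : ∀ u : Fin (1 + n), enc P₁ π₁ (P₁.part u) = enc P₂ π₂ (P₂.part u)) :
    P₁ = P₂ := by
  have hpart : ∀ u, P₁.part u = P₂.part u := by
    intro u
    ext y
    rw [P₁.mem_part_iff_part_eq_part (Finset.mem_univ y) (Finset.mem_univ u),
        P₂.mem_part_iff_part_eq_part (Finset.mem_univ y) (Finset.mem_univ u),
        part_iff_enc P₁ π₁ y u, part_iff_enc P₂ π₂ y u, h y, h u]
  refine Finpartition.ext ?_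
  ext B
  constructor
  · intro hB
    obtain ⟨u, hu⟩ := P₁.nonempty_of_mem_parts hB
    rw [← P₁.part_eq_of_mem hB hu, hpart]
    exact P₂.part_mem.mpr (Finset.mem_univ u)
  · intro hB
    obtain ⟨u, hu⟩ := P₂.nonempty_of_mem_parts hB
    rw [← P₂.part_eq_of_mem hB hu, ← hpart]
    exact P₁.part_mem.mpr (Finset.mem_univ u)

private lemma perm_det {n : ℕ} {P : Finpartition (Finset.univ : Finset (Fin (1 + n)))}
    {π₁ π₂ : Equiv.Perm ↥(K P)}
    (h : ∀ u : Fin (1 + n), enc P π₁ (P.part u) = enc P π₂ (P.part u)) : π₁ = π₂ := by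
  apply Equiv.ext
  rintro ⟨B, hB⟩
  have hBp : B ∈ P.parts := Finset.mem_of_mem_erase hB
  obtain ⟨u, hu⟩ := P.nonempty_of_mem_parts hBp
  have hpu : P.part u = B := P.part_eq_of_mem hBp hu
  have h' := h u
  rw [hpu] at h'
  have hv := congrArg Fin.val h'
  rw [enc_pos_val P π₁ B hB, enc_pos_val P π₂ B hB] at hv
  have e1 : (Fintype.equivFin ↥(K P)) (π₁ ⟨B, hB⟩) = (Fintype.equivFin ↥(K P)) (π₂ ⟨B, hB⟩) :=
    Fin.ext (by omega)
  exact (Equiv.injective _) e1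

private lemma Phi_inj {n : ℕ} : Function.Injective
    (fun (Pπ : Σ P : Finpartition (Finset.univ : Finset (Fin (1 + n))), Equiv.Perm ↥(K P))
      (x : Fin n) => enc Pπ.1 Pπ.2 (Pπ.1.part ⟨x.1 + 1, by omega⟩)) := by
  rintro ⟨P₁, π₁⟩ ⟨P₂, π₂⟩ h
  have hG : ∀ u : Fin (1 + n), enc P₁ π₁ (P₁.part u) = enc P₂ π₂ (P₂.part u) := by
    intro u
    by_cases hu : u.1 = 0
    · have hu0 : u = (⟨0, by omega⟩ : Fin (1 + n)) := Fin.ext hu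
      have e₁ : P₁.part u ∉ K P₁ := by rw [hu0]; exact Finset.notMem_erase _ _
      have e₂ : P₂.part u ∉ K P₂ := by rw [hu0]; exact Finset.notMem_erase _ _
      exact Fin.ext (by rw [enc_neg P₁ π₁ _ e₁, enc_neg P₂ π₂ _ e₂])
    · have hx : (⟨u.1 - 1 + 1, by omega⟩ : Fin (1 + n)) = u := by
        apply Fin.ext
        show u.1 - 1 + 1 = u.1
        omega
      have := congrFun h ⟨u.1 - 1, by omega⟩
      simpa [hx] using this
  have hP : P₁ = P₂ := parts_det hG
  subst hP
  have hπ : π₁ = π₂ := perm_det hG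
  rw [hπ]

private lemma partition_count (n : ℕ) :
    ∑ P : Finpartition (Finset.univ : Finset (Fin (1 + n))),
      Nat.factorial (P.parts.card - 1) ≤ (1 + n) ^ n := by
  classical
  have key := Fintype.card_le_of_injective _ (Phi_inj (n := n))
  rw [Fintype.card_sigma, Fintype.card_fun, Fintype.card_fin, Fintype.card_fin] at key
  refine le_trans (le_of_eq ?_) key
  refine Finset.sum_congr rfl fun P _ => ?_
  rw [Fintype.card_perm, Fintype.card_coe]
  congr 1
  have hz : P.part ⟨0, by omega⟩ ∈ P.parts := P.part_mem.mpr (Finset.mem_univ _)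
  exact (Finset.card_erase_of_mem hz).symm

private lemma count_le_real (n : ℕ) :
    (((1 + n) ^ n : ℕ) : ℝ) ≤ (Nat.factorial n : ℝ) * Real.exp 1 ^ (n + 1) := by
  push_cast
  have hx : (0:ℝ) ≤ 1 + (n:ℝ) := by positivity
  have h2 := Real.sum_le_exp_of_nonneg hx (n + 1)
  have h3 : (1 + (n:ℝ)) ^ n / (Nat.factorial n : ℝ) ≤ Real.exp (1 + (n:ℝ)) :=
    le_trans (Finset.single_le_sum (f := fun i => (1 + (n:ℝ)) ^ i / (Nat.factorial i : ℝ))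
      (fun i _ => by positivity) (Finset.self_mem_range_succ n)) h2
  have h4 : Real.exp 1 ^ (n + 1) = Real.exp (1 + (n:ℝ)) := by
    rw [← Real.exp_nat_mul]
    congr 1
    push_cast
    ring
  rw [div_le_iff₀ (by positivity : (0:ℝ) < (Nat.factorial n : ℝ))] at h3
  calc (1 + (n:ℝ)) ^ n ≤ Real.exp (1 + (n:ℝ)) * (Nat.factorial n : ℝ) := h3
    _ = (Nat.factorial n : ℝ) * Real.exp 1 ^ (n + 1) := by rw [h4]; ring

/-- Norm bound for the dual cumulant series on the space `L_γ` of sequences of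
bounded operators with norm `‖g‖_γ = sup_n (γ^n/n!)‖g_n‖`. The spaces `E n`
abstract the bounded operators on the `n`-particle Hilbert spaces, and
`T s n j P` is the product over the blocks of the partition `P` of a
`(1+n)`-element set of the isometric conjugation groups `G_m(t)` (for the index
tuple `j`), hence norm-nonincreasing. If `0 < γ < e⁻¹` and `g ∈ L_γ`
(i.e. the weighted norms are bounded), then `U⁺(t)g` (each component a finite,
hence convergent, sum) satisfies `‖U⁺(t)g‖_γ ≤ e²(1-γe)⁻¹ ‖g‖_γ`,
componentwise: `(γ^s/s!)‖(U⁺(t)g)_s‖ ≤ e²(1-γe)⁻¹ ‖g‖_γ` for every `s`. -/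
theorem stmt13 (γ : ℝ) (hγ0 : 0 < γ) (hγ : γ < (Real.exp 1)⁻¹)
    (E : ℕ → Type*) [∀ n, NormedAddCommGroup (E n)] [∀ n, NormedSpace ℝ (E n)]
    (g : (n : ℕ) → E n)
    (hg : BddAbove (Set.range fun n => γ ^ n / (Nat.factorial n : ℝ) * ‖g n‖))
    (T : (s : ℕ) → (n : ℕ) → (Fin (s - n) → Fin s) →
      Finpartition (Finset.univ : Finset (Fin (1 + n))) → E (s - n) → E s)
    (hT : ∀ s n j P, ‖T s n j P (g (s - n))‖ ≤ ‖g (s - n)‖) :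
    ∀ s : ℕ,
      γ ^ s / (Nat.factorial s : ℝ) *
        ‖∑ n ∈ Finset.range (s + 1), ((Nat.factorial (s - n) : ℝ))⁻¹ •
            ∑ j ∈ (Finset.univ : Finset (Fin (s - n) → Fin s)).filter
              (fun j => Function.Injective j),
              ∑ P : Finpartition (Finset.univ : Finset (Fin (1 + n))),
                ((-1 : ℝ) ^ (P.parts.card - 1) * (Nat.factorial (P.parts.card - 1) : ℝ)) •
                  T s n j P (g (s - n))‖
        ≤ Real.exp 1 ^ 2 * (1 - γ * Real.exp 1)⁻¹ *
            (⨆ n : ℕ, γ ^ n / (Nat.factorial n : ℝ) * ‖g n‖) := by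
  intro s
  classical
  have he : (0:ℝ) < Real.exp 1 := Real.exp_pos 1
  have he1 : (1:ℝ) ≤ Real.exp 1 := Real.one_le_exp (by norm_num)
  have hγe : γ * Real.exp 1 < 1 := by
    have := mul_lt_mul_of_pos_right hγ he
    rwa [inv_mul_cancel₀ (ne_of_gt he)] at this
  have h1γe : (0:ℝ) < 1 - γ * Real.exp 1 := by linarith
  set M := ⨆ n : ℕ, γ ^ n / (Nat.factorial n : ℝ) * ‖g n‖ with hMdef
  have hMle : ∀ k : ℕ, γ ^ k / (Nat.factorial k : ℝ) * ‖g k‖ ≤ M := fun k => le_ciSup hg k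
  have hM0 : (0:ℝ) ≤ M := le_trans (by positivity) (hMle 0)
  -- component-wise norm bound
  have hnorm : ∀ n ∈ Finset.range (s + 1),
      ‖((Nat.factorial (s - n) : ℝ))⁻¹ •
          ∑ j ∈ (Finset.univ : Finset (Fin (s - n) → Fin s)).filter
            (fun j => Function.Injective j),
            ∑ P : Finpartition (Finset.univ : Finset (Fin (1 + n))),
              ((-1 : ℝ) ^ (P.parts.card - 1) * (Nat.factorial (P.parts.card - 1) : ℝ)) •
                T s n j P (g (s - n))‖
        ≤ ((Nat.factorial (s - n) : ℝ))⁻¹ *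
            ((s.descFactorial (s - n) : ℝ) * ((((1 + n) ^ n : ℕ) : ℝ) * ‖g (s - n)‖)) := by
    intro n _
    rw [norm_smul]
    have hns : ‖((Nat.factorial (s - n) : ℝ))⁻¹‖ = ((Nat.factorial (s - n) : ℝ))⁻¹ := by
      rw [Real.norm_eq_abs, abs_of_nonneg (by positivity)]
    rw [hns]
    refine mul_le_mul_of_nonneg_left ?_ (by positivity)
    have hj : ∀ j ∈ (Finset.univ : Finset (Fin (s - n) → Fin s)).filter
        (fun j => Function.Injective j),
        ‖∑ P : Finpartition (Finset.univ : Finset (Fin (1 + n))),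
            ((-1 : ℝ) ^ (P.parts.card - 1) * (Nat.factorial (P.parts.card - 1) : ℝ)) •
              T s n j P (g (s - n))‖
          ≤ (((1 + n) ^ n : ℕ) : ℝ) * ‖g (s - n)‖ := by
      intro j _
      refine le_trans (norm_sum_le _ _) ?_
      have hP : ∀ P : Finpartition (Finset.univ : Finset (Fin (1 + n))),
          ‖((-1 : ℝ) ^ (P.parts.card - 1) * (Nat.factorial (P.parts.card - 1) : ℝ)) •
              T s n j P (g (s - n))‖
            ≤ (Nat.factorial (P.parts.card - 1) : ℝ) * ‖g (s - n)‖ := by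
        intro P
        rw [norm_smul]
        have habs : ‖(-1 : ℝ) ^ (P.parts.card - 1) * (Nat.factorial (P.parts.card - 1) : ℝ)‖
            = (Nat.factorial (P.parts.card - 1) : ℝ) := by
          rw [Real.norm_eq_abs, abs_mul, abs_pow, abs_neg, abs_one, one_pow, one_mul,
            abs_of_nonneg (by positivity)]
        rw [habs]
        exact mul_le_mul_of_nonneg_left (hT s n j P) (by positivity)
      refine le_trans (Finset.sum_le_sum fun P _ => hP P) ?_
      rw [← Finset.sum_mul]
      refine mul_le_mul_of_nonneg_right ?_ (norm_nonneg _)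
      exact_mod_cast partition_count n
    refine le_trans (norm_sum_le _ _) (le_trans (Finset.sum_le_sum hj) ?_)
    rw [Finset.sum_const, nsmul_eq_mul]
    have hcard : ((Finset.univ : Finset (Fin (s - n) → Fin s)).filter
        (fun j => Function.Injective j)).card = s.descFactorial (s - n) := by
      rw [← Fintype.card_subtype]
      rw [Fintype.card_congr (Equiv.subtypeInjectiveEquivEmbedding (Fin (s - n)) (Fin s))]
      rw [Fintype.card_embedding_eq, Fintype.card_fin, Fintype.card_fin]
    rw [hcard]
  have key : ∀ n ∈ Finset.range (s + 1),
      γ ^ s / (Nat.factorial s : ℝ) *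
          (((Nat.factorial (s - n) : ℝ))⁻¹ *
            ((s.descFactorial (s - n) : ℝ) * ((((1 + n) ^ n : ℕ) : ℝ) * ‖g (s - n)‖)))
        ≤ (Real.exp 1 * M) * (γ * Real.exp 1) ^ n := by
    intro n hn
    have hns : n ≤ s := by
      have := Finset.mem_range.mp hn
      omega
    have h0 : s - (s - n) = n := by omega
    have hdn := Nat.factorial_mul_descFactorial (Nat.sub_le s n)
    rw [h0] at hdn
    have hfn : (0:ℝ) < (Nat.factorial n : ℝ) := by positivity
    have hdesc : (s.descFactorial (s - n) : ℝ) = (Nat.factorial s : ℝ) / (Nat.factorial n : ℝ) := by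
      rw [eq_div_iff (ne_of_gt hfn)]
      exact_mod_cast (mul_comm (Nat.factorial n) (s.descFactorial (s - n))) ▸ hdn
    have hsplit : γ ^ s = γ ^ n * γ ^ (s - n) := by
      rw [← pow_add]
      congr 1
      omega
    have heq : γ ^ s / (Nat.factorial s : ℝ) *
        (((Nat.factorial (s - n) : ℝ))⁻¹ *
          ((s.descFactorial (s - n) : ℝ) * ((((1 + n) ^ n : ℕ) : ℝ) * ‖g (s - n)‖)))
        = (γ ^ n * (((1 + n) ^ n : ℕ) : ℝ) / (Nat.factorial n : ℝ)) *
            (γ ^ (s - n) / (Nat.factorial (s - n) : ℝ) * ‖g (s - n)‖) := by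
      rw [hdesc, hsplit]
      have hfs : (0:ℝ) < (Nat.factorial s : ℝ) := by positivity
      have hfsn : (0:ℝ) < (Nat.factorial (s - n) : ℝ) := by positivity
      field_simp
    rw [heq]
    have step1 : (γ ^ n * (((1 + n) ^ n : ℕ) : ℝ) / (Nat.factorial n : ℝ)) *
        (γ ^ (s - n) / (Nat.factorial (s - n) : ℝ) * ‖g (s - n)‖)
        ≤ (γ ^ n * ((Nat.factorial n : ℝ) * Real.exp 1 ^ (n + 1)) / (Nat.factorial n : ℝ)) * M := by
      refine mul_le_mul ?_ (hMle (s - n)) (by positivity) (by positivity)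
      gcongr
      exact count_le_real n
    refine le_trans step1 (le_of_eq ?_)
    rw [mul_pow, pow_succ, mul_div_assoc, mul_div_cancel_left₀ _ (ne_of_gt hfn)]
    ring
  calc γ ^ s / (Nat.factorial s : ℝ) *
      ‖∑ n ∈ Finset.range (s + 1), ((Nat.factorial (s - n) : ℝ))⁻¹ •
          ∑ j ∈ (Finset.univ : Finset (Fin (s - n) → Fin s)).filter
            (fun j => Function.Injective j),
            ∑ P : Finpartition (Finset.univ : Finset (Fin (1 + n))),
              ((-1 : ℝ) ^ (P.parts.card - 1) * (Nat.factorial (P.parts.card - 1) : ℝ)) •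
                T s n j P (g (s - n))‖
      ≤ γ ^ s / (Nat.factorial s : ℝ) * ∑ n ∈ Finset.range (s + 1),
          ‖((Nat.factorial (s - n) : ℝ))⁻¹ •
            ∑ j ∈ (Finset.univ : Finset (Fin (s - n) → Fin s)).filter
              (fun j => Function.Injective j),
              ∑ P : Finpartition (Finset.univ : Finset (Fin (1 + n))),
                ((-1 : ℝ) ^ (P.parts.card - 1) * (Nat.factorial (P.parts.card - 1) : ℝ)) •
                  T s n j P (g (s - n))‖ := by
        refine mul_le_mul_of_nonneg_left (norm_sum_le _ _) (by positivity)
    _ ≤ ∑ n ∈ Finset.range (s + 1), (Real.exp 1 * M) * (γ * Real.exp 1) ^ n := by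
        rw [Finset.mul_sum]
        refine Finset.sum_le_sum fun n hn => ?_
        exact le_trans (mul_le_mul_of_nonneg_left (hnorm n hn) (by positivity)) (key n hn)
    _ = (Real.exp 1 * M) * ∑ n ∈ Finset.range (s + 1), (γ * Real.exp 1) ^ n := by
        rw [Finset.mul_sum]
    _ ≤ (Real.exp 1 * M) * (1 - γ * Real.exp 1)⁻¹ := by
        refine mul_le_mul_of_nonneg_left (geom_partial_le (by positivity) hγe _) (by positivity)
    _ ≤ Real.exp 1 ^ 2 * (1 - γ * Real.exp 1)⁻¹ * M := by
        have hee : Real.exp 1 ≤ Real.exp 1 ^ 2 := by nlinarith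
        have hinv : (0:ℝ) ≤ (1 - γ * Real.exp 1)⁻¹ := by positivity
        calc (Real.exp 1 * M) * (1 - γ * Real.exp 1)⁻¹
            = Real.exp 1 * (1 - γ * Real.exp 1)⁻¹ * M := by ring
          _ ≤ Real.exp 1 ^ 2 * (1 - γ * Real.exp 1)⁻¹ * M :=
              mul_le_mul_of_nonneg_right (mul_le_mul_of_nonneg_right hee hinv) hM0
end
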